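/- arXiv:2210.16482 — 7 statements merged into one kernel-verified Lean document; each statement's English description precedes it below -/
import Mathlib

section
/- Under Assumption 1, if the step size satisfies η < (2L)^{-1}, then for all integers a > b ≥ 1 the Lv.k GP reasoning iterates satisfy ‖ω_t^(a) − ω_t^(b)‖ ≤ η^b · L^{b−1} · Δ_max; in particular the sequence (ω_t^(k))_{k≥0} is a Cauchy sequence in ℝ^{m+n}. -/
open Filter Topology

set_option maxHeartbeats 1000000 in
/-- if `η < (2L)⁻¹` then for all `a > b ≥ 1` the Lv.k GP reasoning iterates satisfy
`‖ω_t^(a) − ω_t^(b)‖ ≤ η^b L^(b−1) Δ_max`; in particular the sequence `(ω_t^(k))_k` is Cauchy. -/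
theorem lvk_gp_cauchy_sequence
    (m n : ℕ)
    (f g : EuclideanSpace ℝ (Fin m) → EuclideanSpace ℝ (Fin n) → ℝ)
    (hfdiff : ∀ φ, Differentiable ℝ (fun θ => f θ φ))
    (hgdiff : ∀ θ, Differentiable ℝ (fun φ => g θ φ))
    (Lθθ Lθφ Lφθ Lφφ L : ℝ)
    (hL : L = max (max Lθθ Lθφ) (max Lφθ Lφφ))
    (hLip1 : ∀ (φ : EuclideanSpace ℝ (Fin n)) (θ₁ θ₂ : EuclideanSpace ℝ (Fin m)),
      ‖gradient (fun θ => f θ φ) θ₁ - gradient (fun θ => f θ φ) θ₂‖ ≤ Lθθ * ‖θ₁ - θ₂‖)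
    (hLip2 : ∀ (θ : EuclideanSpace ℝ (Fin m)) (φ₁ φ₂ : EuclideanSpace ℝ (Fin n)),
      ‖gradient (fun θ' => f θ' φ₁) θ - gradient (fun θ' => f θ' φ₂) θ‖ ≤ Lθφ * ‖φ₁ - φ₂‖)
    (hLip3 : ∀ (φ : EuclideanSpace ℝ (Fin n)) (θ₁ θ₂ : EuclideanSpace ℝ (Fin m)),
      ‖gradient (fun φ' => g θ₁ φ') φ - gradient (fun φ' => g θ₂ φ') φ‖ ≤ Lφθ * ‖θ₁ - θ₂‖)
    (hLip4 : ∀ (θ : EuclideanSpace ℝ (Fin m)) (φ₁ φ₂ : EuclideanSpace ℝ (Fin n)),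
      ‖gradient (fun φ' => g θ φ') φ₁ - gradient (fun φ' => g θ φ') φ₂‖ ≤ Lφφ * ‖φ₁ - φ₂‖)
    (η : ℝ) (hη : 0 < η)
    (θt : EuclideanSpace ℝ (Fin m)) (φt : EuclideanSpace ℝ (Fin n))
    (Θ : ℕ → EuclideanSpace ℝ (Fin m)) (Φ : ℕ → EuclideanSpace ℝ (Fin n))
    (hΘ0 : Θ 0 = θt) (hΦ0 : Φ 0 = φt)
    (hΘ : ∀ k : ℕ, Θ (k + 1) = θt - η • gradient (fun θ => f θ (Φ k)) θt)
    (hΦ : ∀ k : ℕ, Φ (k + 1) = φt - η • gradient (fun φ => g (Θ k) φ) φt)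
    (Δmax : ℝ)
    (hΔ : Δmax = 2 * max ‖gradient (fun θ => f θ φt) θt‖ ‖gradient (fun φ => g θt φ) φt‖)
    (hLpos : 0 < L) (hηL : η < (2 * L)⁻¹) :
    (∀ a b : ℕ, 1 ≤ b → b < a →
      Real.sqrt (‖Θ a - Θ b‖ ^ 2 + ‖Φ a - Φ b‖ ^ 2) ≤ η ^ b * L ^ (b - 1) * Δmax) ∧
    CauchySeq (fun k => (Θ k, Φ k)) := by

  set r := η * L with hr
  have h1 : η * (2 * L) < 1 := by
    have h := mul_lt_mul_of_pos_right hηL (by positivity : (0:ℝ) < 2 * L)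
    rwa [inv_mul_cancel₀ (by positivity)] at h
  have hr0 : 0 < r := by positivity
  have hr2 : 2 * r < 1 := by rw [hr]; nlinarith
  have hr1 : r < 1 := by linarith
  have hΔ0 : 0 ≤ Δmax := by
    rw [hΔ]
    have := norm_nonneg (gradient (fun θ => f θ φt) θt)
    have := le_max_left ‖gradient (fun θ => f θ φt) θt‖ ‖gradient (fun φ => g θt φ) φt‖
    linarith
  set D := η * Δmax / 2 with hD
  have hD0 : 0 ≤ D := by positivity
  have hLθφ : Lθφ ≤ L := by rw [hL]; exact le_max_of_le_left (le_max_right _ _)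
  have hLφθ : Lφθ ≤ L := by rw [hL]; exact le_max_of_le_right (le_max_left _ _)
  -- step bound
  have key : ∀ k, ‖Θ (k+1) - Θ k‖ ≤ r ^ k * D ∧ ‖Φ (k+1) - Φ k‖ ≤ r ^ k * D := by
    intro k
    induction k with
    | zero =>
      have hf2 : ‖gradient (fun θ => f θ φt) θt‖ ≤ Δmax / 2 := by
        rw [hΔ]
        have := le_max_left ‖gradient (fun θ => f θ φt) θt‖ ‖gradient (fun φ => g θt φ) φt‖
        linarith
      have hg2 : ‖gradient (fun φ => g θt φ) φt‖ ≤ Δmax / 2 := by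
        rw [hΔ]
        have := le_max_right ‖gradient (fun θ => f θ φt) θt‖ ‖gradient (fun φ => g θt φ) φt‖
        linarith
      constructor
      · rw [hΘ 0, hΘ0, hΦ0]
        have e : θt - η • gradient (fun θ => f θ φt) θt - θt
            = -(η • gradient (fun θ => f θ φt) θt) := by abel
        rw [e, norm_neg, norm_smul, Real.norm_eq_abs, abs_of_pos hη]
        simp only [pow_zero, one_mul, hD]
        nlinarith
      · rw [hΦ 0, hΦ0, hΘ0]
        have e : φt - η • gradient (fun φ => g θt φ) φt - φt
            = -(η • gradient (fun φ => g θt φ) φt) := by abel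
        rw [e, norm_neg, norm_smul, Real.norm_eq_abs, abs_of_pos hη]
        simp only [pow_zero, one_mul, hD]
        nlinarith
    | succ k ih =>
      obtain ⟨ihΘ, ihΦ⟩ := ih
      have hrkD : (0:ℝ) ≤ r ^ k * D := by positivity
      constructor
      · rw [hΘ (k+1), hΘ k]
        have e : θt - η • gradient (fun θ => f θ (Φ (k+1))) θt
            - (θt - η • gradient (fun θ => f θ (Φ k)) θt)
            = -(η • (gradient (fun θ => f θ (Φ (k+1))) θt
                - gradient (fun θ => f θ (Φ k)) θt)) := by
          rw [smul_sub]; abel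
        rw [e, norm_neg, norm_smul, Real.norm_eq_abs, abs_of_pos hη]
        have hlip := hLip2 θt (Φ (k+1)) (Φ k)
        have hn : ‖Φ (k+1) - Φ k‖ ≤ r ^ k * D := ihΦ
        have hnn : (0:ℝ) ≤ ‖Φ (k+1) - Φ k‖ := norm_nonneg _
        have : ‖gradient (fun θ' => f θ' (Φ (k+1))) θt - gradient (fun θ' => f θ' (Φ k)) θt‖
            ≤ L * (r ^ k * D) := by
          calc _ ≤ Lθφ * ‖Φ (k+1) - Φ k‖ := hlip
          _ ≤ L * ‖Φ (k+1) - Φ k‖ := mul_le_mul_of_nonneg_right hLθφ hnn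
          _ ≤ L * (r ^ k * D) := mul_le_mul_of_nonneg_left hn hLpos.le
        calc η * ‖gradient (fun θ' => f θ' (Φ (k+1))) θt - gradient (fun θ' => f θ' (Φ k)) θt‖
            ≤ η * (L * (r ^ k * D)) := mul_le_mul_of_nonneg_left this hη.le
          _ = r ^ (k+1) * D := by rw [hr]; ring
      · rw [hΦ (k+1), hΦ k]
        have e : φt - η • gradient (fun φ => g (Θ (k+1)) φ) φt
            - (φt - η • gradient (fun φ => g (Θ k) φ) φt)
            = -(η • (gradient (fun φ => g (Θ (k+1)) φ) φt
                - gradient (fun φ => g (Θ k) φ) φt)) := by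
          rw [smul_sub]; abel
        rw [e, norm_neg, norm_smul, Real.norm_eq_abs, abs_of_pos hη]
        have hlip := hLip3 φt (Θ (k+1)) (Θ k)
        have hn : ‖Θ (k+1) - Θ k‖ ≤ r ^ k * D := ihΘ
        have hnn : (0:ℝ) ≤ ‖Θ (k+1) - Θ k‖ := norm_nonneg _
        have : ‖gradient (fun φ' => g (Θ (k+1)) φ') φt - gradient (fun φ' => g (Θ k) φ') φt‖
            ≤ L * (r ^ k * D) := by
          calc _ ≤ Lφθ * ‖Θ (k+1) - Θ k‖ := hlip
          _ ≤ L * ‖Θ (k+1) - Θ k‖ := mul_le_mul_of_nonneg_right hLφθ hnn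
          _ ≤ L * (r ^ k * D) := mul_le_mul_of_nonneg_left hn hLpos.le
        calc η * ‖gradient (fun φ' => g (Θ (k+1)) φ') φt - gradient (fun φ' => g (Θ k) φ') φt‖
            ≤ η * (L * (r ^ k * D)) := mul_le_mul_of_nonneg_left this hη.le
          _ = r ^ (k+1) * D := by rw [hr]; ring
  -- telescoping bound
  have tele : ∀ b j : ℕ, ‖Θ (b+j) - Θ b‖ ≤ (2 - 2 * r ^ j) * (r ^ b * D)
      ∧ ‖Φ (b+j) - Φ b‖ ≤ (2 - 2 * r ^ j) * (r ^ b * D) := by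
    intro b j
    induction j with
    | zero => simp
    | succ j ih =>
      obtain ⟨ihΘ, ihΦ⟩ := ih
      have hk := key (b+j)
      have hrb : (0:ℝ) ≤ r ^ b := by positivity
      have hrj : (0:ℝ) ≤ r ^ j := by positivity
      have hpow : r ^ (b+j) = r ^ b * r ^ j := pow_add r b j
      constructor
      · calc ‖Θ (b+(j+1)) - Θ b‖ = ‖(Θ (b+j+1) - Θ (b+j)) + (Θ (b+j) - Θ b)‖ := by
              rw [show b+(j+1) = b+j+1 from rfl]; congr 1; abel
          _ ≤ ‖Θ (b+j+1) - Θ (b+j)‖ + ‖Θ (b+j) - Θ b‖ := norm_add_le _ _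
          _ ≤ r ^ (b+j) * D + (2 - 2 * r ^ j) * (r ^ b * D) := add_le_add hk.1 ihΘ
          _ ≤ (2 - 2 * r ^ (j+1)) * (r ^ b * D) := by
              rw [hpow, pow_succ]
              nlinarith [mul_nonneg (mul_nonneg (mul_nonneg hrb hrj) hD0)
                (show (0:ℝ) ≤ 1 - 2*r by linarith)]
      · calc ‖Φ (b+(j+1)) - Φ b‖ = ‖(Φ (b+j+1) - Φ (b+j)) + (Φ (b+j) - Φ b)‖ := by
              rw [show b+(j+1) = b+j+1 from rfl]; congr 1; abel
          _ ≤ ‖Φ (b+j+1) - Φ (b+j)‖ + ‖Φ (b+j) - Φ b‖ := norm_add_le _ _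
          _ ≤ r ^ (b+j) * D + (2 - 2 * r ^ j) * (r ^ b * D) := add_le_add hk.2 ihΦ
          _ ≤ (2 - 2 * r ^ (j+1)) * (r ^ b * D) := by
              rw [hpow, pow_succ]
              nlinarith [mul_nonneg (mul_nonneg (mul_nonneg hrb hrj) hD0)
                (show (0:ℝ) ≤ 1 - 2*r by linarith)]
  constructor
  · intro a b hb hba
    obtain ⟨j, rfl⟩ : ∃ j, a = b + j := ⟨a - b, by omega⟩
    have hrb : (0:ℝ) ≤ r ^ b := by positivity
    have hrj : (0:ℝ) ≤ r ^ j := by positivity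
    have h2 : (0:ℝ) ≤ 2 - 2 * r ^ j := by nlinarith [pow_le_one₀ hr0.le hr1.le (n := j)]
    have hΘb : ‖Θ (b+j) - Θ b‖ ≤ 2 * (r ^ b * D) := by
      calc _ ≤ (2 - 2 * r ^ j) * (r ^ b * D) := (tele b j).1
        _ ≤ 2 * (r ^ b * D) := by nlinarith [mul_nonneg hrb hD0]
    have hΦb : ‖Φ (b+j) - Φ b‖ ≤ 2 * (r ^ b * D) := by
      calc _ ≤ (2 - 2 * r ^ j) * (r ^ b * D) := (tele b j).2
        _ ≤ 2 * (r ^ b * D) := by nlinarith [mul_nonneg hrb hD0]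
    have hx := norm_nonneg (Θ (b+j) - Θ b)
    have hy := norm_nonneg (Φ (b+j) - Φ b)
    have hsqrt : Real.sqrt (‖Θ (b+j) - Θ b‖ ^ 2 + ‖Φ (b+j) - Φ b‖ ^ 2)
        ≤ ‖Θ (b+j) - Θ b‖ + ‖Φ (b+j) - Φ b‖ := by
      rw [show ‖Θ (b+j) - Θ b‖ + ‖Φ (b+j) - Φ b‖
          = Real.sqrt ((‖Θ (b+j) - Θ b‖ + ‖Φ (b+j) - Φ b‖) ^ 2) from
        (Real.sqrt_sq (by positivity)).symm]
      apply Real.sqrt_le_sqrt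
      nlinarith [mul_nonneg hx hy]
    obtain ⟨c, rfl⟩ : ∃ c, b = c + 1 := ⟨b - 1, by omega⟩
    have hrbsplit : r ^ (c+1) = r * r ^ c := by rw [pow_succ]; ring
    have hgoal : η ^ (c+1) * L ^ (c+1-1) * Δmax = η * r ^ c * Δmax := by
      simp only [Nat.add_sub_cancel, hr, mul_pow, pow_succ]; ring
    rw [hgoal]
    have hrb1 : (0:ℝ) ≤ r ^ c := by positivity
    calc Real.sqrt (‖Θ (c+1+j) - Θ (c+1)‖ ^ 2 + ‖Φ (c+1+j) - Φ (c+1)‖ ^ 2)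
        ≤ ‖Θ (c+1+j) - Θ (c+1)‖ + ‖Φ (c+1+j) - Φ (c+1)‖ := hsqrt
      _ ≤ 4 * (r ^ (c+1) * D) := by linarith
      _ = (2 * r) * (η * r ^ c * Δmax) := by rw [hrbsplit, hD]; ring
      _ ≤ η * r ^ c * Δmax := by nlinarith [mul_nonneg (mul_nonneg hη.le hrb1) hΔ0]
  · apply cauchySeq_of_le_geometric r D hr1
    intro k
    rw [Prod.dist_eq]
    simp only [dist_eq_norm]
    have h1 : ‖Θ k - Θ (k+1)‖ ≤ D * r ^ k := by
      rw [norm_sub_rev]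
      calc _ ≤ r ^ k * D := (key k).1
        _ = D * r ^ k := mul_comm _ _
    have h2 : ‖Φ k - Φ (k+1)‖ ≤ D * r ^ k := by
      rw [norm_sub_rev]
      calc _ ≤ r ^ k * D := (key k).2
        _ = D * r ^ k := mul_comm _ _
    exact max_le h1 h2
end

section
/- Under Assumption 1, if the step size satisfies η < (2L)^{-1}, then the sequence of Lv.k GP reasoning iterates (ω_t^(k))_{k≥0} converges: there exists ω_t^* = (θ_t^*, φ_t^*) ∈ ℝ^{m+n} such that lim_{k→∞} ω_t^(k) = ω_t^*. -/
/-!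
The Lv.k GP iterates are the orbit of the map `ω_t^(k-1) ↦ ω_t^(k)`, whose first component
depends only on `φ` and whose second only on `θ`. By the cross Lipschitz bounds on the gradients
this map is `ηL`-Lipschitz for the product (max) distance, so for `η < (2L)⁻¹` it is a
contraction of the complete space `ℝ^m × ℝ^n`, and the orbit converges to its fixed point by
Banach's theorem.
-/

open Filter Topology NNReal

theorem LipschitzWith.const_sub_smul {α β : Type*} [PseudoEMetricSpace α]
    [SeminormedAddCommGroup β] [NormedSpace ℝ β] {K : ℝ≥0} {G : α → β}
    (hG : LipschitzWith K G) (c : β) (η : ℝ) :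
    LipschitzWith (‖η‖₊ * K) fun x => c - η • G x := by
  simpa using (LipschitzWith.const c).sub ((lipschitzWith_smul η).comp hG)

theorem exists_tendsto_of_succ_eq_of_contractingWith {α : Type*} [MetricSpace α]
    [CompleteSpace α] {K : ℝ≥0} {T : α → α} (hT : ContractingWith K T)
    {u : ℕ → α} (hu : ∀ k, u (k + 1) = T (u k)) :
    ∃ x, Tendsto u atTop (𝓝 x) := by
  have : Nonempty α := ⟨u 0⟩
  have h_orbit : u = fun k => T^[k] (u 0) := by
    funext k
    induction k with
    | zero => rfl
    | succ k ih => rw [hu, ih, Function.iterate_succ_apply']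
  rw [h_orbit]
  exact ⟨_, hT.tendsto_iterate_fixedPoint (u 0)⟩

section GradientPlay

variable {E F : Type*} [NormedAddCommGroup E] [InnerProductSpace ℝ E] [CompleteSpace E]
  [NormedAddCommGroup F] [InnerProductSpace ℝ F] [CompleteSpace F]

/-- The Lv.k GP reasoning map `ω_t^(k-1) ↦ ω_t^(k)` at the state `(θt, φt)`. -/
noncomputable def gpReasoningStep (f g : E → F → ℝ) (η : ℝ) (θt : E) (φt : F) (ω : E × F) :
    E × F :=
  (θt - η • gradient (fun θ => f θ ω.2) θt, φt - η • gradient (fun φ => g ω.1 φ) φt)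

theorem lipschitzWith_gpReasoningStep {f g : E → F → ℝ} {θt : E} {φt : F} {K : ℝ≥0}
    (hf : LipschitzWith K fun φ => gradient (fun θ => f θ φ) θt)
    (hg : LipschitzWith K fun θ => gradient (fun φ => g θ φ) φt) (η : ℝ) :
    LipschitzWith (‖η‖₊ * K) (gpReasoningStep f g η θt φt) := by
  have h := ((hf.const_sub_smul θt η).comp LipschitzWith.prod_snd).prodMk
    ((hg.const_sub_smul φt η).comp LipschitzWith.prod_fst)
  rwa [mul_one, max_self] at h

end GradientPlay

theorem lvk_gp_iterates_converge_general
    (m n : ℕ)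
    (f g : EuclideanSpace ℝ (Fin m) → EuclideanSpace ℝ (Fin n) → ℝ)
    (Lθθ Lθφ Lφθ Lφφ L : ℝ)
    (hL : L = max (max Lθθ Lθφ) (max Lφθ Lφφ))
    (hLip2 : ∀ (θ : EuclideanSpace ℝ (Fin m)) (φ₁ φ₂ : EuclideanSpace ℝ (Fin n)),
      ‖gradient (fun θ' => f θ' φ₁) θ - gradient (fun θ' => f θ' φ₂) θ‖ ≤ Lθφ * ‖φ₁ - φ₂‖)
    (hLip3 : ∀ (φ : EuclideanSpace ℝ (Fin n)) (θ₁ θ₂ : EuclideanSpace ℝ (Fin m)),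
      ‖gradient (fun φ' => g θ₁ φ') φ - gradient (fun φ' => g θ₂ φ') φ‖ ≤ Lφθ * ‖θ₁ - θ₂‖)
    (η : ℝ) (hη : 0 < η)
    (θt : EuclideanSpace ℝ (Fin m)) (φt : EuclideanSpace ℝ (Fin n))
    (Θ : ℕ → EuclideanSpace ℝ (Fin m)) (Φ : ℕ → EuclideanSpace ℝ (Fin n))
    (hΘ : ∀ k : ℕ, Θ (k + 1) = θt - η • gradient (fun θ => f θ (Φ k)) θt)
    (hΦ : ∀ k : ℕ, Φ (k + 1) = φt - η • gradient (fun φ => g (Θ k) φ) φt)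
    (hηL : η < (2 * L)⁻¹) :
    ∃ (θs : EuclideanSpace ℝ (Fin m)) (φs : EuclideanSpace ℝ (Fin n)),
      Tendsto (fun k => (Θ k, Φ k)) atTop (𝓝 (θs, φs)) := by
  have hLpos : 0 < L := by linarith [inv_pos.mp (hη.trans hηL)]
  have hf : LipschitzWith L.toNNReal fun φ => gradient (fun θ => f θ φ) θt :=
    (LipschitzWith.of_dist_le' <| by simpa only [dist_eq_norm] using hLip2 θt).weaken <|
      Real.toNNReal_le_toNNReal <| hL ▸ le_max_of_le_left (le_max_right _ _)
  have hg : LipschitzWith L.toNNReal fun θ => gradient (fun φ => g θ φ) φt :=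
    (LipschitzWith.of_dist_le' <| by simpa only [dist_eq_norm] using hLip3 φt).weaken <|
      Real.toNNReal_le_toNNReal <| hL ▸ le_max_of_le_right (le_max_left _ _)
  have hηL_lt_one : ‖η‖₊ * L.toNNReal < 1 := by
    rw [← NNReal.coe_lt_coe, NNReal.coe_mul, coe_nnnorm, Real.norm_of_nonneg hη.le,
      Real.coe_toNNReal _ hLpos.le, NNReal.coe_one]
    have : η * (2 * L) < 1 := by
      rwa [← lt_div_iff₀ (by positivity), one_div]
    linarith [mul_pos hη hLpos]
  obtain ⟨⟨θs, φs⟩, h⟩ := exists_tendsto_of_succ_eq_of_contractingWith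
    ⟨hηL_lt_one, lipschitzWith_gpReasoningStep hf hg η⟩
    (u := fun k => (Θ k, Φ k)) fun k => Prod.ext (hΘ k) (hΦ k)
  exact ⟨θs, φs, h⟩

/-- if `η < (2L)⁻¹` then the Lv.k GP reasoning iterates converge to some limit
`ω_t^* = (θ_t^*, φ_t^*)`. -/
theorem lvk_gp_iterates_converge
    (m n : ℕ)
    (f g : EuclideanSpace ℝ (Fin m) → EuclideanSpace ℝ (Fin n) → ℝ)
    (hfdiff : ∀ φ, Differentiable ℝ (fun θ => f θ φ))
    (hgdiff : ∀ θ, Differentiable ℝ (fun φ => g θ φ))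
    (Lθθ Lθφ Lφθ Lφφ L : ℝ)
    (hL : L = max (max Lθθ Lθφ) (max Lφθ Lφφ))
    (hLip1 : ∀ (φ : EuclideanSpace ℝ (Fin n)) (θ₁ θ₂ : EuclideanSpace ℝ (Fin m)),
      ‖gradient (fun θ => f θ φ) θ₁ - gradient (fun θ => f θ φ) θ₂‖ ≤ Lθθ * ‖θ₁ - θ₂‖)
    (hLip2 : ∀ (θ : EuclideanSpace ℝ (Fin m)) (φ₁ φ₂ : EuclideanSpace ℝ (Fin n)),
      ‖gradient (fun θ' => f θ' φ₁) θ - gradient (fun θ' => f θ' φ₂) θ‖ ≤ Lθφ * ‖φ₁ - φ₂‖)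
    (hLip3 : ∀ (φ : EuclideanSpace ℝ (Fin n)) (θ₁ θ₂ : EuclideanSpace ℝ (Fin m)),
      ‖gradient (fun φ' => g θ₁ φ') φ - gradient (fun φ' => g θ₂ φ') φ‖ ≤ Lφθ * ‖θ₁ - θ₂‖)
    (hLip4 : ∀ (θ : EuclideanSpace ℝ (Fin m)) (φ₁ φ₂ : EuclideanSpace ℝ (Fin n)),
      ‖gradient (fun φ' => g θ φ') φ₁ - gradient (fun φ' => g θ φ') φ₂‖ ≤ Lφφ * ‖φ₁ - φ₂‖)
    (η : ℝ) (hη : 0 < η)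
    (θt : EuclideanSpace ℝ (Fin m)) (φt : EuclideanSpace ℝ (Fin n))
    (Θ : ℕ → EuclideanSpace ℝ (Fin m)) (Φ : ℕ → EuclideanSpace ℝ (Fin n))
    (hΘ0 : Θ 0 = θt) (hΦ0 : Φ 0 = φt)
    (hΘ : ∀ k : ℕ, Θ (k + 1) = θt - η • gradient (fun θ => f θ (Φ k)) θt)
    (hΦ : ∀ k : ℕ, Φ (k + 1) = φt - η • gradient (fun φ => g (Θ k) φ) φt)
    (hLpos : 0 < L) (hηL : η < (2 * L)⁻¹) :
    ∃ (θs : EuclideanSpace ℝ (Fin m)) (φs : EuclideanSpace ℝ (Fin n)),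
      Tendsto (fun k => (Θ k, Φ k)) atTop (𝓝 (θs, φs)) :=
  lvk_gp_iterates_converge_general m n f g Lθθ Lθφ Lφθ Lφφ L hL hLip2 hLip3 η hη θt φt Θ Φ hΘ hΦ hηL
end

section
/- Under Assumption 1 and η < (2L)^{-1}, Lv.k GP is an O(η^k) approximation of SPPM: for every k ≥ 1, the distance of the level-k reasoning iterate to the SPPM limit satisfies ‖ω_t^(k) − ω_t^*‖ ≤ η^k · L^{k−1} · Δ_max, where ω_t^* = lim_{j→∞} ω_t^(j). -/
/-!
The reasoning map `T (θ, φ) = (θₜ - η ∇_θ f(θₜ, φ), φₜ - η ∇_φ g(θ, φₜ))` generates the Lv.k GP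
iterates, `ω⁽ᵏ⁾ = Tᵏ ω⁽⁰⁾`, and in the sup norm of the product it is Lipschitz with constant
`r = ηL ≤ 1/2`, since each component only sees the other one through a cross-Lipschitz gradient.
The first step has length `η Δ_max / 2`, so the geometric tail bound gives
`‖ω⁽ᵏ⁾ - ω*‖_∞ ≤ (η Δ_max / 2) rᵏ / (1 - r) ≤ η rᵏ Δ_max`, and passing to the Euclidean norm costs
a factor `√2 ≤ 1 / r`.
-/

open Filter Topology NNReal

theorem LipschitzWith.dist_iterate_le_of_tendsto {α : Type*} [PseudoMetricSpace α] {K : ℝ≥0}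
    {T : α → α} (hT : LipschitzWith K T) (hK : K < 1) {x a : α}
    (ha : Tendsto (fun n => T^[n] x) atTop (𝓝 a)) (n : ℕ) :
    dist (T^[n] x) a ≤ dist x (T x) * K ^ n / (1 - K) :=
  dist_le_of_le_geometric_of_tendsto _ _ hK (hT.dist_iterate_succ_le_geometric x) ha n

theorem LipschitzWith.prodMk_snd_fst {α β : Type*} [PseudoEMetricSpace α] [PseudoEMetricSpace β]
    {K : ℝ≥0} {A : β → α} {B : α → β} (hA : LipschitzWith K A) (hB : LipschitzWith K B) :
    LipschitzWith K fun p : α × β => (A p.2, B p.1) := by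
  simpa using (hA.comp LipschitzWith.prod_snd).prodMk (hB.comp LipschitzWith.prod_fst)

theorem lipschitzWith_const_sub_smul {E F : Type*} [SeminormedAddCommGroup E] [NormedSpace ℝ E]
    [PseudoMetricSpace F] {G : F → E} {K η : ℝ} (hη : 0 ≤ η)
    (hG : ∀ y₁ y₂, ‖G y₁ - G y₂‖ ≤ K * dist y₁ y₂) (x : E) :
    LipschitzWith (η * K).toNNReal fun y => x - η • G y :=
  LipschitzWith.of_dist_le' fun y₁ y₂ => by
    rw [dist_sub_left, dist_smul₀, Real.norm_of_nonneg hη, dist_eq_norm, mul_assoc]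
    exact mul_le_mul_of_nonneg_left (hG y₁ y₂) hη

section CrossedIteration

variable {α β : Type*} {A : β → α} {B : α → β} {u : ℕ → α} {v : ℕ → β}

theorem iterate_prodMk_snd_fst_eq (hu : ∀ k, u (k + 1) = A (v k)) (hv : ∀ k, v (k + 1) = B (u k))
    (n : ℕ) : (fun p : α × β => (A p.2, B p.1))^[n] (u 0, v 0) = (u n, v n) := by
  induction n with
  | zero => rfl
  | succ n ih => rw [Function.iterate_succ_apply', ih, hu, hv]

theorem dist_le_of_crossed_lipschitz [PseudoMetricSpace α] [PseudoMetricSpace β] {K : ℝ≥0}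
    (hA : LipschitzWith K A) (hB : LipschitzWith K B) (hK : K < 1)
    (hu : ∀ k, u (k + 1) = A (v k)) (hv : ∀ k, v (k + 1) = B (u k))
    {a : α} {b : β} (hlim : Tendsto (fun k => (u k, v k)) atTop (𝓝 (a, b))) (n : ℕ) :
    dist (u n, v n) (a, b) ≤ max (dist (u 0) (u 1)) (dist (v 0) (v 1)) * K ^ n / (1 - K) := by
  have := (hA.prodMk_snd_fst hB).dist_iterate_le_of_tendsto hK (x := (u 0, v 0))
    (by simpa only [iterate_prodMk_snd_fst_eq hu hv] using hlim) n
  rwa [iterate_prodMk_snd_fst_eq hu hv, Prod.dist_eq, ← hu, ← hv] at this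

end CrossedIteration

theorem Real.sqrt_sq_add_sq_le {a b D : ℝ} (ha : |a| ≤ D) (hb : |b| ≤ D) :
    √(a ^ 2 + b ^ 2) ≤ √2 * D := by
  have hD : 0 ≤ D := (abs_nonneg a).trans ha
  rw [← Real.sqrt_sq hD, ← Real.sqrt_mul zero_le_two]
  gcongr
  nlinarith [sq_le_sq' (abs_le.1 ha).1 (abs_le.1 ha).2, sq_le_sq' (abs_le.1 hb).1 (abs_le.1 hb).2]

theorem sqrt_two_mul_geometric_tail_le {η L D : ℝ} (hη : 0 ≤ η) (hL : 0 ≤ L) (hD : 0 ≤ D)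
    (hr : η * L ≤ 1 / 2) (j : ℕ) :
    √2 * (η * (D / 2) * (η * L) ^ (j + 1) / (1 - η * L)) ≤ η ^ (j + 1) * L ^ j * D :=
  calc √2 * (η * (D / 2) * (η * L) ^ (j + 1) / (1 - η * L))
      = √2 * (η * L / (1 - η * L)) * (η ^ (j + 1) * L ^ j * D) / 2 := by
        rw [mul_pow, pow_succ L]; ring
    _ ≤ 2 * 1 * (η ^ (j + 1) * L ^ j * D) / 2 := by
        gcongr
        · exact div_nonneg (by positivity) (by linarith)
        · rw [Real.sqrt_le_iff]; norm_num
        · rw [div_le_one (by linarith)]; linarith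
    _ = η ^ (j + 1) * L ^ j * D := by ring

theorem lvk_gp_approximates_sppm_general
    (m n : ℕ)
    (f g : EuclideanSpace ℝ (Fin m) → EuclideanSpace ℝ (Fin n) → ℝ)
    (Lθθ Lθφ Lφθ Lφφ L : ℝ)
    (hL : L = max (max Lθθ Lθφ) (max Lφθ Lφφ))
    (hLip2 : ∀ (θ : EuclideanSpace ℝ (Fin m)) (φ₁ φ₂ : EuclideanSpace ℝ (Fin n)),
      ‖gradient (fun θ' => f θ' φ₁) θ - gradient (fun θ' => f θ' φ₂) θ‖ ≤ Lθφ * ‖φ₁ - φ₂‖)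
    (hLip3 : ∀ (φ : EuclideanSpace ℝ (Fin n)) (θ₁ θ₂ : EuclideanSpace ℝ (Fin m)),
      ‖gradient (fun φ' => g θ₁ φ') φ - gradient (fun φ' => g θ₂ φ') φ‖ ≤ Lφθ * ‖θ₁ - θ₂‖)
    (η : ℝ) (hη : 0 < η)
    (θt : EuclideanSpace ℝ (Fin m)) (φt : EuclideanSpace ℝ (Fin n))
    (Θ : ℕ → EuclideanSpace ℝ (Fin m)) (Φ : ℕ → EuclideanSpace ℝ (Fin n))
    (hΘ0 : Θ 0 = θt) (hΦ0 : Φ 0 = φt)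
    (hΘ : ∀ k : ℕ, Θ (k + 1) = θt - η • gradient (fun θ => f θ (Φ k)) θt)
    (hΦ : ∀ k : ℕ, Φ (k + 1) = φt - η • gradient (fun φ => g (Θ k) φ) φt)
    (Δmax : ℝ)
    (hΔ : Δmax = 2 * max ‖gradient (fun θ => f θ φt) θt‖ ‖gradient (fun φ => g θt φ) φt‖)
    (hLpos : 0 < L) (hηL : η < (2 * L)⁻¹)
    (θs : EuclideanSpace ℝ (Fin m)) (φs : EuclideanSpace ℝ (Fin n))
    (hlim : Tendsto (fun k => (Θ k, Φ k)) atTop (𝓝 (θs, φs)))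
    (k : ℕ) (hk : 1 ≤ k) :
    Real.sqrt (‖Θ k - θs‖ ^ 2 + ‖Φ k - φs‖ ^ 2) ≤ η ^ k * L ^ (k - 1) * Δmax := by
  set r := η * L
  have hr : r ≤ 1 / 2 := by
    rw [← one_div, lt_div_iff₀ (by positivity)] at hηL
    linarith
  have hK : ((r.toNNReal : ℝ≥0) : ℝ) = r := Real.coe_toNNReal _ (by positivity)
  have hA : LipschitzWith r.toNNReal fun φ => θt - η • gradient (fun θ => f θ φ) θt :=
    lipschitzWith_const_sub_smul hη.le (fun φ₁ φ₂ =>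
      (hLip2 θt φ₁ φ₂).trans (by rw [← dist_eq_norm, hL]; gcongr; grind)) θt
  have hB : LipschitzWith r.toNNReal fun θ => φt - η • gradient (fun φ => g θ φ) φt :=
    lipschitzWith_const_sub_smul hη.le (fun θ₁ θ₂ =>
      (hLip3 φt θ₁ θ₂).trans (by rw [← dist_eq_norm, hL]; gcongr; grind)) φt
  have hdist := dist_le_of_crossed_lipschitz hA hB
    (by rw [← NNReal.coe_lt_coe, hK, NNReal.coe_one]; linarith) hΘ hΦ hlim k
  have hstep : max (dist (Θ 0) (Θ 1)) (dist (Φ 0) (Φ 1)) = η * (Δmax / 2) := by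
    simp only [hΘ, hΦ, hΘ0, hΦ0, dist_self_sub_right, norm_smul, Real.norm_of_nonneg hη.le,
      ← mul_max_of_nonneg _ _ hη.le, hΔ]
    ring
  rw [hstep, hK] at hdist
  obtain ⟨j, rfl⟩ := Nat.exists_eq_add_of_le' hk
  calc √(‖Θ (j + 1) - θs‖ ^ 2 + ‖Φ (j + 1) - φs‖ ^ 2)
      ≤ √2 * (η * (Δmax / 2) * r ^ (j + 1) / (1 - r)) := by
        refine Real.sqrt_sq_add_sq_le ?_ ?_ <;> rw [abs_norm, ← dist_eq_norm] <;>
          refine le_trans ?_ hdist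
        · exact le_max_left _ _
        · exact le_max_right _ _
    _ ≤ η ^ (j + 1) * L ^ j * Δmax :=
        sqrt_two_mul_geometric_tail_le hη.le hLpos.le (by rw [hΔ]; positivity) hr j

/-- Lv.k GP is an `O(η^k)` approximation of SPPM: for every `k ≥ 1`,
`‖ω_t^(k) − ω_t^*‖ ≤ η^k L^(k−1) Δ_max`. -/
theorem lvk_gp_approximates_sppm
    (m n : ℕ)
    (f g : EuclideanSpace ℝ (Fin m) → EuclideanSpace ℝ (Fin n) → ℝ)
    (hfdiff : ∀ φ, Differentiable ℝ (fun θ => f θ φ))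
    (hgdiff : ∀ θ, Differentiable ℝ (fun φ => g θ φ))
    (Lθθ Lθφ Lφθ Lφφ L : ℝ)
    (hL : L = max (max Lθθ Lθφ) (max Lφθ Lφφ))
    (hLip1 : ∀ (φ : EuclideanSpace ℝ (Fin n)) (θ₁ θ₂ : EuclideanSpace ℝ (Fin m)),
      ‖gradient (fun θ => f θ φ) θ₁ - gradient (fun θ => f θ φ) θ₂‖ ≤ Lθθ * ‖θ₁ - θ₂‖)
    (hLip2 : ∀ (θ : EuclideanSpace ℝ (Fin m)) (φ₁ φ₂ : EuclideanSpace ℝ (Fin n)),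
      ‖gradient (fun θ' => f θ' φ₁) θ - gradient (fun θ' => f θ' φ₂) θ‖ ≤ Lθφ * ‖φ₁ - φ₂‖)
    (hLip3 : ∀ (φ : EuclideanSpace ℝ (Fin n)) (θ₁ θ₂ : EuclideanSpace ℝ (Fin m)),
      ‖gradient (fun φ' => g θ₁ φ') φ - gradient (fun φ' => g θ₂ φ') φ‖ ≤ Lφθ * ‖θ₁ - θ₂‖)
    (hLip4 : ∀ (θ : EuclideanSpace ℝ (Fin m)) (φ₁ φ₂ : EuclideanSpace ℝ (Fin n)),
      ‖gradient (fun φ' => g θ φ') φ₁ - gradient (fun φ' => g θ φ') φ₂‖ ≤ Lφφ * ‖φ₁ - φ₂‖)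
    (η : ℝ) (hη : 0 < η)
    (θt : EuclideanSpace ℝ (Fin m)) (φt : EuclideanSpace ℝ (Fin n))
    (Θ : ℕ → EuclideanSpace ℝ (Fin m)) (Φ : ℕ → EuclideanSpace ℝ (Fin n))
    (hΘ0 : Θ 0 = θt) (hΦ0 : Φ 0 = φt)
    (hΘ : ∀ k : ℕ, Θ (k + 1) = θt - η • gradient (fun θ => f θ (Φ k)) θt)
    (hΦ : ∀ k : ℕ, Φ (k + 1) = φt - η • gradient (fun φ => g (Θ k) φ) φt)
    (Δmax : ℝ)
    (hΔ : Δmax = 2 * max ‖gradient (fun θ => f θ φt) θt‖ ‖gradient (fun φ => g θt φ) φt‖)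
    (hLpos : 0 < L) (hηL : η < (2 * L)⁻¹)
    (θs : EuclideanSpace ℝ (Fin m)) (φs : EuclideanSpace ℝ (Fin n))
    (hlim : Tendsto (fun k => (Θ k, Φ k)) atTop (𝓝 (θs, φs)))
    (k : ℕ) (hk : 1 ≤ k) :
    Real.sqrt (‖Θ k - θs‖ ^ 2 + ‖Φ k - φs‖ ^ 2) ≤ η ^ k * L ^ (k - 1) * Δmax :=
  lvk_gp_approximates_sppm_general m n f g Lθθ Lθφ Lφθ Lφφ L hL hLip2 hLip3 η hη θt φt Θ Φ hΘ0 hΦ0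
    hΘ hΦ Δmax hΔ hLpos hηL θs φs hlim k hk
end

section
/- Let B be a real m×n matrix, η ∈ ℝ, Q_θ = (I_m + η²BBᵀ)^{-1} and Q_φ = (I_n + η²BᵀB)^{-1}. Then for every vector u ∈ ℝ^m, ‖Q_θ u‖² + η² ‖Q_φ Bᵀ u‖² = uᵀ (I_m + η²BBᵀ)^{-1} u. -/
open Matrix Filter Topology

/-- The squared Euclidean norm of a vector `v : ι → ℝ`. -/
noncomputable def eNormSq {ι : Type*} [Fintype ι] (v : ι → ℝ) : ℝ :=
  ‖(EuclideanSpace.equiv ι ℝ).symm v‖ ^ 2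

lemma eNormSq_eq_dot {ι : Type*} [Fintype ι] (v : ι → ℝ) : eNormSq v = v ⬝ᵥ v := by
  rw [eNormSq, EuclideanSpace.norm_eq, Real.sq_sqrt (by positivity)]
  simp [dotProduct, Real.norm_eq_abs, sq_abs, sq]

lemma posDef_aux (m n : ℕ) (B : Matrix (Fin m) (Fin n) ℝ) (η : ℝ) :
    ((1 : Matrix (Fin m) (Fin m) ℝ) + η ^ 2 • (B * Bᵀ)).PosDef := by
  have h : η ^ 2 • (B * Bᵀ) = (η • B) * (η • B)ᵀ := by
    rw [Matrix.transpose_smul, Matrix.smul_mul, Matrix.mul_smul, smul_smul, ← sq]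
  rw [h]
  exact Matrix.PosDef.add_posSemidef Matrix.PosDef.one
    (by simpa [Matrix.conjTranspose_eq_transpose_of_trivial] using
      Matrix.posSemidef_self_mul_conjTranspose (η • B))

/-- for every `u`, `‖Q_θ u‖² + η²‖Q_φ Bᵀ u‖² = uᵀ (I + η²BBᵀ)⁻¹ u`. -/
theorem qtheta_quadratic_identity
    (m n : ℕ) (B : Matrix (Fin m) (Fin n) ℝ) (η : ℝ)
    (Qθ : Matrix (Fin m) (Fin m) ℝ) (Qφ : Matrix (Fin n) (Fin n) ℝ)
    (hQθ : Qθ = ((1 : Matrix (Fin m) (Fin m) ℝ) + η ^ 2 • (B * Bᵀ))⁻¹)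
    (hQφ : Qφ = ((1 : Matrix (Fin n) (Fin n) ℝ) + η ^ 2 • (Bᵀ * B))⁻¹)
    (u : Fin m → ℝ) :
    eNormSq (Qθ *ᵥ u) + η ^ 2 * eNormSq (Qφ *ᵥ (Bᵀ *ᵥ u)) =
      u ⬝ᵥ (((1 : Matrix (Fin m) (Fin m) ℝ) + η ^ 2 • (B * Bᵀ))⁻¹ *ᵥ u) := by
  subst hQθ hQφ
  set A : Matrix (Fin m) (Fin m) ℝ := 1 + η ^ 2 • (B * Bᵀ) with hAdef
  set A' : Matrix (Fin n) (Fin n) ℝ := 1 + η ^ 2 • (Bᵀ * B) with hA'def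
  have hA : A.PosDef := posDef_aux m n B η
  have hA' : A'.PosDef := by simpa using posDef_aux n m Bᵀ η
  letI := hA.isUnit.invertible
  letI := hA'.isUnit.invertible
  have hcomm : Bᵀ * A = A' * Bᵀ := by
    simp [hAdef, hA'def, Matrix.mul_add, Matrix.add_mul, Matrix.mul_smul, Matrix.smul_mul,
      Matrix.mul_assoc]
  have hswap : A'⁻¹ * Bᵀ = Bᵀ * A⁻¹ := by
    have h := congrArg (fun M => A'⁻¹ * M * A⁻¹) hcomm
    simpa only [Matrix.mul_assoc, Matrix.mul_inv_of_invertible,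
      Matrix.inv_mul_cancel_left_of_invertible, Matrix.mul_one] using h
  set w : Fin m → ℝ := A⁻¹ *ᵥ u with hw
  have hvec : A'⁻¹ *ᵥ (Bᵀ *ᵥ u) = Bᵀ *ᵥ w := by
    rw [hw, Matrix.mulVec_mulVec, Matrix.mulVec_mulVec, hswap]
  have hu : u = A *ᵥ w := by
    rw [hw, Matrix.mulVec_mulVec, Matrix.mul_inv_of_invertible, Matrix.one_mulVec]
  rw [hvec, eNormSq_eq_dot, eNormSq_eq_dot]
  conv_rhs => rw [hu]
  have hdot : (A *ᵥ w) ⬝ᵥ w = w ⬝ᵥ w + η ^ 2 * ((Bᵀ *ᵥ w) ⬝ᵥ (Bᵀ *ᵥ w)) := by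
    have h1 : (B *ᵥ (Bᵀ *ᵥ w)) ⬝ᵥ w = (Bᵀ *ᵥ w) ⬝ᵥ (Bᵀ *ᵥ w) := by
      rw [dotProduct_comm, Matrix.dotProduct_mulVec, ← Matrix.mulVec_transpose]
    simp [hAdef, Matrix.add_mulVec, add_dotProduct, Matrix.smul_mulVec,
      smul_dotProduct, ← Matrix.mulVec_mulVec, h1, Matrix.one_mulVec]
  rw [hdot]
end

section
/- Let B be a real m×n matrix, η ∈ ℝ, Q_θ = (I_m + η²BBᵀ)^{-1} and Q_φ = (I_n + η²BᵀB)^{-1}. Then for every vector v ∈ ℝ^n, ‖Q_φ v‖² + η² ‖Q_θ B v‖² = vᵀ (I_n + η²BᵀB)^{-1} v. -/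
open Matrix Filter Topology

lemma posdef_aux {k l : ℕ} (η : ℝ) (B : Matrix (Fin k) (Fin l) ℝ) :
    ((1 : Matrix (Fin l) (Fin l) ℝ) + η ^ 2 • (Bᵀ * B)).PosDef := by
  have h : η ^ 2 • (Bᵀ * B) = (η • B)ᵀ * (η • B) := by
    simp [smul_mul_assoc, mul_smul_comm, smul_smul, sq]
  have hps : (η ^ 2 • (Bᵀ * B)).PosSemidef := by
    rw [h]
    have := Matrix.posSemidef_conjTranspose_mul_self (η • B)
    simpa using this
  exact Matrix.PosDef.add_posSemidef Matrix.PosDef.one hps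

/-- for every `v`, `‖Q_φ v‖² + η²‖Q_θ B v‖² = vᵀ (I + η²BᵀB)⁻¹ v`. -/
theorem qphi_quadratic_identity
    (m n : ℕ) (B : Matrix (Fin m) (Fin n) ℝ) (η : ℝ)
    (Qθ : Matrix (Fin m) (Fin m) ℝ) (Qφ : Matrix (Fin n) (Fin n) ℝ)
    (hQθ : Qθ = ((1 : Matrix (Fin m) (Fin m) ℝ) + η ^ 2 • (B * Bᵀ))⁻¹)
    (hQφ : Qφ = ((1 : Matrix (Fin n) (Fin n) ℝ) + η ^ 2 • (Bᵀ * B))⁻¹)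
    (v : Fin n → ℝ) :
    eNormSq (Qφ *ᵥ v) + η ^ 2 * eNormSq (Qθ *ᵥ (B *ᵥ v)) =
      v ⬝ᵥ (((1 : Matrix (Fin n) (Fin n) ℝ) + η ^ 2 • (Bᵀ * B))⁻¹ *ᵥ v) := by
  subst hQθ hQφ
  set A : Matrix (Fin n) (Fin n) ℝ := 1 + η ^ 2 • (Bᵀ * B) with hA
  set Aθ : Matrix (Fin m) (Fin m) ℝ := 1 + η ^ 2 • (B * Bᵀ) with hAθ
  have hAp : A.PosDef := posdef_aux η B
  have hAθp : Aθ.PosDef := by simpa [hAθ] using posdef_aux η Bᵀ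
  have hAdet : IsUnit A.det := (Matrix.isUnit_iff_isUnit_det _).1 hAp.isUnit
  have hAθdet : IsUnit Aθ.det := (Matrix.isUnit_iff_isUnit_det _).1 hAθp.isUnit
  have h1 := Matrix.nonsing_inv_mul Aθ hAθdet
  have h2 := Matrix.mul_nonsing_inv A hAdet
  have hcomm : Aθ * B = B * A := by
    rw [hA, hAθ]
    rw [Matrix.add_mul, Matrix.mul_add, Matrix.one_mul, Matrix.mul_one,
      Matrix.smul_mul, Matrix.mul_smul, Matrix.mul_assoc]
  have hBA : B * A⁻¹ = Aθ⁻¹ * B := by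
    calc B * A⁻¹ = (Aθ⁻¹ * Aθ) * B * A⁻¹ := by rw [h1, Matrix.one_mul]
    _ = Aθ⁻¹ * (B * A) * A⁻¹ := by rw [Matrix.mul_assoc Aθ⁻¹, hcomm, Matrix.mul_assoc]
    _ = Aθ⁻¹ * B := by rw [Matrix.mul_assoc, Matrix.mul_assoc, h2, Matrix.mul_one]
  set w : Fin n → ℝ := A⁻¹ *ᵥ v with hw
  have hθv : Aθ⁻¹ *ᵥ (B *ᵥ v) = B *ᵥ w := by
    rw [hw, Matrix.mulVec_mulVec, Matrix.mulVec_mulVec, hBA]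
  have hv : A *ᵥ w = v := by
    rw [hw, Matrix.mulVec_mulVec, h2, Matrix.one_mulVec]
  have key : (A *ᵥ w) ⬝ᵥ w = w ⬝ᵥ w + η ^ 2 * ((B *ᵥ w) ⬝ᵥ (B *ᵥ w)) := by
    rw [hA]
    rw [Matrix.add_mulVec, Matrix.one_mulVec, Matrix.smul_mulVec,
      add_dotProduct, smul_dotProduct, ← Matrix.mulVec_mulVec,
      smul_eq_mul]
    congr 1
    rw [Matrix.mulVec_transpose, ← Matrix.dotProduct_mulVec]
  rw [hθv, eNormSq_eq_dot, eNormSq_eq_dot, ← hv, key, dotProduct_comm]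
end

section
/- Let B be a real m×n matrix and η ∈ ℝ, with Q_θ = (I_m + η²BBᵀ)^{-1} and Q_φ = (I_n + η²BᵀB)^{-1}. For any vectors u ∈ ℝ^m and v ∈ ℝ^n, if θ' = Q_θ (u − ηBv) and φ' = Q_φ (ηBᵀu + v), then ‖θ'‖² + ‖φ'‖² = uᵀ (I_m + η²BBᵀ)^{-1} u + vᵀ (I_n + η²BᵀB)^{-1} v. -/
open Matrix Filter Topology

lemma dp_mv_mv {p q r : Type*} [Fintype p] [Fintype q] [Fintype r]
    (M : Matrix p q ℝ) (N : Matrix p r ℝ) (x : q → ℝ) (y : r → ℝ) :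
    (M *ᵥ x) ⬝ᵥ (N *ᵥ y) = x ⬝ᵥ ((Mᵀ * N) *ᵥ y) := by
  rw [Matrix.dotProduct_mulVec, ← Matrix.vecMul_transpose, Matrix.vecMul_vecMul,
    ← Matrix.dotProduct_mulVec]

lemma dp_swap {p q : Type*} [Fintype p] [Fintype q]
    (K : Matrix p q ℝ) (x : p → ℝ) (y : q → ℝ) :
    x ⬝ᵥ (K *ᵥ y) = y ⬝ᵥ (Kᵀ *ᵥ x) := by
  rw [Matrix.dotProduct_mulVec, Matrix.mulVec_transpose, dotProduct_comm]

/-- if `θ' = Q_θ (u − ηBv)` and `φ' = Q_φ (ηBᵀu + v)`, then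
`‖θ'‖² + ‖φ'‖² = uᵀ (I + η²BBᵀ)⁻¹ u + vᵀ (I + η²BᵀB)⁻¹ v`. -/
theorem sppm_norm_identity
    (m n : ℕ) (B : Matrix (Fin m) (Fin n) ℝ) (η : ℝ)
    (Qθ : Matrix (Fin m) (Fin m) ℝ) (Qφ : Matrix (Fin n) (Fin n) ℝ)
    (hQθ : Qθ = ((1 : Matrix (Fin m) (Fin m) ℝ) + η ^ 2 • (B * Bᵀ))⁻¹)
    (hQφ : Qφ = ((1 : Matrix (Fin n) (Fin n) ℝ) + η ^ 2 • (Bᵀ * B))⁻¹)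
    (u : Fin m → ℝ) (v : Fin n → ℝ)
    (θ' : Fin m → ℝ) (φ' : Fin n → ℝ)
    (hθ' : θ' = Qθ *ᵥ (u - η • (B *ᵥ v)))
    (hφ' : φ' = Qφ *ᵥ (η • (Bᵀ *ᵥ u) + v)) :
    eNormSq θ' + eNormSq φ' =
      u ⬝ᵥ (((1 : Matrix (Fin m) (Fin m) ℝ) + η ^ 2 • (B * Bᵀ))⁻¹ *ᵥ u) +
      v ⬝ᵥ (((1 : Matrix (Fin n) (Fin n) ℝ) + η ^ 2 • (Bᵀ * B))⁻¹ *ᵥ v) := by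
  set Aθ : Matrix (Fin m) (Fin m) ℝ := 1 + η ^ 2 • (B * Bᵀ) with hAθdef
  set Aφ : Matrix (Fin n) (Fin n) ℝ := 1 + η ^ 2 • (Bᵀ * B) with hAφdef
  -- positive definiteness
  have hBBt : (η ^ 2 • (B * Bᵀ)).PosSemidef := by
    have h1 : η ^ 2 • (B * Bᵀ) = (η • B) * (η • B)ᵀ := by
      rw [Matrix.transpose_smul, Matrix.smul_mul, Matrix.mul_smul, smul_smul, sq]
    rw [h1]
    simpa [Matrix.conjTranspose_eq_transpose_of_trivial] using
      Matrix.posSemidef_self_mul_conjTranspose (η • B)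
  have hBtB : (η ^ 2 • (Bᵀ * B)).PosSemidef := by
    have h1 : η ^ 2 • (Bᵀ * B) = (η • B)ᵀ * (η • B) := by
      rw [Matrix.transpose_smul, Matrix.smul_mul, Matrix.mul_smul, smul_smul, sq]
    rw [h1]
    simpa [Matrix.conjTranspose_eq_transpose_of_trivial] using
      Matrix.posSemidef_conjTranspose_mul_self (η • B)
  have hAθpd : Aθ.PosDef := Matrix.PosDef.add_posSemidef Matrix.PosDef.one hBBt
  have hAφpd : Aφ.PosDef := Matrix.PosDef.add_posSemidef Matrix.PosDef.one hBtB
  have hdθ : IsUnit Aθ.det := (Matrix.isUnit_iff_isUnit_det _).mp hAθpd.isUnit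
  have hdφ : IsUnit Aφ.det := (Matrix.isUnit_iff_isUnit_det _).mp hAφpd.isUnit
  -- symmetry
  have hAθt : Aθᵀ = Aθ := by
    rw [← Matrix.conjTranspose_eq_transpose_of_trivial]; exact hAθpd.isHermitian
  have hAφt : Aφᵀ = Aφ := by
    rw [← Matrix.conjTranspose_eq_transpose_of_trivial]; exact hAφpd.isHermitian
  have hQθt : Qθᵀ = Qθ := by rw [hQθ, Matrix.transpose_nonsing_inv, hAθt]
  have hQφt : Qφᵀ = Qφ := by rw [hQφ, Matrix.transpose_nonsing_inv, hAφt]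
  -- inverse equations
  have hQθA : Qθ * Aθ = 1 := by rw [hQθ]; exact Matrix.nonsing_inv_mul _ hdθ
  have hAQθ : Aθ * Qθ = 1 := by rw [hQθ]; exact Matrix.mul_nonsing_inv _ hdθ
  have hQφA : Qφ * Aφ = 1 := by rw [hQφ]; exact Matrix.nonsing_inv_mul _ hdφ
  have hAQφ : Aφ * Qφ = 1 := by rw [hQφ]; exact Matrix.mul_nonsing_inv _ hdφ
  -- intertwining
  have hcomm : Aθ * B = B * Aφ := by
    rw [hAθdef, hAφdef, Matrix.add_mul, Matrix.mul_add, Matrix.one_mul, Matrix.mul_one,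
      Matrix.smul_mul, Matrix.mul_smul, Matrix.mul_assoc]
  have hQB : Qθ * B = B * Qφ := by
    have h : Qθ * (Aθ * B) * Qφ = Qθ * (B * Aφ) * Qφ := by rw [hcomm]
    calc Qθ * B = Qθ * B * (Aφ * Qφ) := by rw [hAQφ, Matrix.mul_one]
      _ = Qθ * (B * Aφ) * Qφ := by simp only [Matrix.mul_assoc]
      _ = Qθ * (Aθ * B) * Qφ := by rw [hcomm]
      _ = (Qθ * Aθ) * (B * Qφ) := by simp only [Matrix.mul_assoc]
      _ = B * Qφ := by rw [hQθA, Matrix.one_mul]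
  have hBtQ : Bᵀ * Qθ = Qφ * Bᵀ := by
    have := congrArg Matrix.transpose hQB
    simpa [Matrix.transpose_mul, hQθt, hQφt] using this
  -- squared inverses
  set S : Matrix (Fin m) (Fin m) ℝ := Qθ * Qθ with hS
  set T : Matrix (Fin n) (Fin n) ℝ := Qφ * Qφ with hT
  have hSB : S * B = B * T := by
    rw [hS, hT, Matrix.mul_assoc, hQB, ← Matrix.mul_assoc, hQB, Matrix.mul_assoc]
  have hBtS : Bᵀ * S = T * Bᵀ := by
    rw [hS, hT, ← Matrix.mul_assoc, hBtQ, Matrix.mul_assoc, hBtQ, ← Matrix.mul_assoc]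
  have hSu : S + η ^ 2 • (B * T * Bᵀ) = Qθ := by
    have h1 : B * T * Bᵀ = S * (B * Bᵀ) := by rw [← hSB, Matrix.mul_assoc]
    calc S + η ^ 2 • (B * T * Bᵀ) = S * 1 + S * (η ^ 2 • (B * Bᵀ)) := by
          rw [h1, Matrix.mul_one, Matrix.mul_smul]
      _ = S * Aθ := by rw [← Matrix.mul_add, hAθdef]
      _ = Qθ * (Qθ * Aθ) := by rw [hS, Matrix.mul_assoc]
      _ = Qθ := by rw [hQθA, Matrix.mul_one]
  have hTv : T + η ^ 2 • (Bᵀ * S * B) = Qφ := by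
    have h1 : Bᵀ * S * B = T * (Bᵀ * B) := by rw [hBtS, Matrix.mul_assoc]
    calc T + η ^ 2 • (Bᵀ * S * B) = T * 1 + T * (η ^ 2 • (Bᵀ * B)) := by
          rw [h1, Matrix.mul_one, Matrix.mul_smul]
      _ = T * Aφ := by rw [← Matrix.mul_add, hAφdef]
      _ = Qφ * (Qφ * Aφ) := by rw [hT, Matrix.mul_assoc]
      _ = Qφ := by rw [hQφA, Matrix.mul_one]
  rw [eNormSq_eq_dot, eNormSq_eq_dot, hθ', hφ', ← hQθ, ← hQφ]
  simp only [Matrix.mulVec_sub, Matrix.mulVec_add, Matrix.mulVec_smul, Matrix.mulVec_mulVec,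
    sub_dotProduct, dotProduct_sub, add_dotProduct, dotProduct_add,
    smul_dotProduct, dotProduct_smul, smul_eq_mul, dp_mv_mv,
    Matrix.transpose_mul, Matrix.transpose_transpose, hQθt, hQφt]
  have e2 : Bᵀ * Qθ * Qθ = Qφ * (Qφ * Bᵀ) := by
    rw [hBtQ, Matrix.mul_assoc, hBtQ]
  have e3 : Qθ * (Qθ * B) = B * Qφ * Qφ := by
    rw [hQB, ← Matrix.mul_assoc, hQB]
  have eu : u ⬝ᵥ ((Qθ * Qθ) *ᵥ u) + η ^ 2 * (u ⬝ᵥ ((B * (Qφ * (Qφ * Bᵀ))) *ᵥ u))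
      = u ⬝ᵥ (Qθ *ᵥ u) := by
    conv_rhs => rw [← hSu]
    simp only [hS, hT, Matrix.add_mulVec, Matrix.smul_mulVec, dotProduct_add,
      dotProduct_smul, smul_eq_mul, Matrix.mul_assoc]
  have ev : v ⬝ᵥ ((Qφ * Qφ) *ᵥ v) + η ^ 2 * (v ⬝ᵥ ((Bᵀ * (Qθ * (Qθ * B))) *ᵥ v))
      = v ⬝ᵥ (Qφ *ᵥ v) := by
    conv_rhs => rw [← hTv]
    simp only [hS, hT, Matrix.add_mulVec, Matrix.smul_mulVec, dotProduct_add,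
      dotProduct_smul, smul_eq_mul, Matrix.mul_assoc]
  rw [e2, e3]
  simp only [Matrix.mul_assoc]
  linear_combination eu + ev
end

section
/- Consider the bilinear game min_θ max_φ θᵀMφ with M a full-rank real n×n matrix, whose unique stationary point is (θ*, φ*) = (0, 0). For any η > 0, if the sequence (θ_t, φ_t)_{t≥0} satisfies the SPPM recursion θ_{t+1} = θ_t − ηMφ_{t+1}, φ_{t+1} = φ_t + ηMᵀθ_{t+1}, then with r_t = ‖θ_t‖² + ‖φ_t‖² one has r_{t+1} ≤ r_t / (1 + η² λ_min(MᵀM)) for all t; since λ_min(MᵀM) > 0, the iterates converge linearly to (0, 0). -/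
/-!
Along an SPPM step the cross terms `⟨θ, Mφ⟩` and `⟨φ, Mᵀθ⟩` cancel, so
`r_t = r_{t+1} + η² (‖M φ_{t+1}‖² + ‖Mᵀ θ_{t+1}‖²)`. Both squared norms are at least `λ_min(MᵀM)`
times `‖φ_{t+1}‖²`, resp. `‖θ_{t+1}‖²`: for `M` this is the Rayleigh bound for `MᵀM`, and for `Mᵀ`
it is the Rayleigh bound for `MMᵀ = M (MᵀM) M⁻¹`, which has the same spectrum. Hence `r_t` decays
geometrically with ratio `1 / (1 + η² λ_min) < 1`.
-/

open Matrix Filter Topology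

theorem spectrum.mul_comm_of_isUnit {R A : Type*} [CommSemiring R] [Ring A] [Algebra R A]
    {a : A} (ha : IsUnit a) (b : A) : spectrum R (a * b) = spectrum R (b * a) := by
  obtain ⟨u, rfl⟩ := ha
  simpa [mul_assoc] using spectrum.units_conjugate (R := R) (a := b * u) (u := u)

theorem tendsto_zero_of_succ_le_div {r : ℕ → ℝ} {K : ℝ} (hK : 1 < K) (hr : ∀ t, 0 ≤ r t)
    (h : ∀ t, r (t + 1) ≤ r t / K) : Tendsto r atTop (𝓝 0) := by
  have hgeom : ∀ t, r t ≤ r 0 * K⁻¹ ^ t := by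
    intro t
    induction t with
    | zero => simp
    | succ t ih =>
      calc r (t + 1) ≤ r t * K⁻¹ := h t
        _ ≤ r 0 * K⁻¹ ^ (t + 1) := by
          rw [pow_succ, ← mul_assoc]
          gcongr
  refine squeeze_zero hr hgeom ?_
  simpa using (tendsto_pow_atTop_nhds_zero_of_lt_one (by positivity)
    (inv_lt_one_of_one_lt₀ hK)).const_mul (r 0)

section

variable {ι : Type*} [Fintype ι]

theorem eNormSq_eq_dotProduct (v : ι → ℝ) : eNormSq v = v ⬝ᵥ v := by
  rw [eNormSq, EuclideanSpace.norm_eq, Real.sq_sqrt (by positivity)]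
  simp [dotProduct, sq]

theorem eNormSq_nonneg (v : ι → ℝ) : 0 ≤ eNormSq v := by
  unfold eNormSq; positivity

theorem Matrix.IsHermitian.mul_dotProduct_self_le_dotProduct_mulVec [DecidableEq ι]
    {A : Matrix ι ι ℝ} (hA : A.IsHermitian) {c : ℝ} (hc : c ∈ lowerBounds (spectrum ℝ A))
    (x : ι → ℝ) :
    c * (x ⬝ᵥ x) ≤ x ⬝ᵥ (A *ᵥ x) := by
  have hpsd : (A - algebraMap ℝ _ c).PosSemidef := by
    refine posSemidef_iff_isHermitian_and_spectrum_nonneg.2 ⟨hA.sub ?_, ?_⟩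
    · exact isHermitian_diagonal _
    · rw [← spectrum.sub_singleton_eq]
      rintro _ ⟨s, hs, _, rfl, rfl⟩
      exact sub_nonneg.2 (hc hs)
  have hquad := hpsd.dotProduct_mulVec_nonneg x
  rw [Algebra.algebraMap_eq_smul_one, sub_mulVec, smul_mulVec, one_mulVec, dotProduct_sub,
    dotProduct_smul, smul_eq_mul, star_trivial] at hquad
  linarith

theorem Matrix.mul_dotProduct_self_le_mulVec [DecidableEq ι] (M : Matrix ι ι ℝ) {c : ℝ}
    (hc : c ∈ lowerBounds (spectrum ℝ (Mᵀ * M))) (x : ι → ℝ) :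
    c * (x ⬝ᵥ x) ≤ (M *ᵥ x) ⬝ᵥ (M *ᵥ x) := by
  have hH : (Mᵀ * M).IsHermitian := by simpa using isHermitian_conjTranspose_mul_self M
  calc c * (x ⬝ᵥ x) ≤ x ⬝ᵥ ((Mᵀ * M) *ᵥ x) :=
        hH.mul_dotProduct_self_le_dotProduct_mulVec hc x
    _ = (M *ᵥ x) ⬝ᵥ (M *ᵥ x) := by
      rw [← mulVec_mulVec, dotProduct_mulVec, vecMul_transpose]

theorem Matrix.mul_dotProduct_self_le_transpose_mulVec [DecidableEq ι] {M : Matrix ι ι ℝ}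
    (hM : IsUnit M) {c : ℝ} (hc : c ∈ lowerBounds (spectrum ℝ (Mᵀ * M))) (x : ι → ℝ) :
    c * (x ⬝ᵥ x) ≤ (Mᵀ *ᵥ x) ⬝ᵥ (Mᵀ *ᵥ x) := by
  refine Mᵀ.mul_dotProduct_self_le_mulVec ?_ x
  rwa [transpose_transpose, spectrum.mul_comm_of_isUnit hM]

theorem sppm_energy_identity (M : Matrix ι ι ℝ) (η : ℝ) {θ φ θ' φ' : ι → ℝ}
    (hθ : θ' = θ - η • (M *ᵥ φ')) (hφ : φ' = φ + η • (Mᵀ *ᵥ θ')) :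
    θ ⬝ᵥ θ + φ ⬝ᵥ φ = θ' ⬝ᵥ θ' + φ' ⬝ᵥ φ' +
      η ^ 2 * ((M *ᵥ φ') ⬝ᵥ (M *ᵥ φ') + (Mᵀ *ᵥ θ') ⬝ᵥ (Mᵀ *ᵥ θ')) := by
  rw [eq_sub_iff_add_eq] at hθ
  rw [eq_sub_of_add_eq hφ.symm, ← hθ]
  have hcross : θ' ⬝ᵥ (M *ᵥ φ') = φ' ⬝ᵥ (Mᵀ *ᵥ θ') := by
    rw [dotProduct_mulVec, ← mulVec_transpose, dotProduct_comm]
  simp only [dotProduct_add, add_dotProduct, dotProduct_sub, sub_dotProduct, dotProduct_smul,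
    smul_dotProduct, smul_eq_mul, dotProduct_comm (M *ᵥ φ') θ', dotProduct_comm (Mᵀ *ᵥ θ') φ',
    hcross]
  ring

theorem sppm_contraction [DecidableEq ι] {M : Matrix ι ι ℝ} (hM : IsUnit M) {c : ℝ}
    (hc : c ∈ lowerBounds (spectrum ℝ (Mᵀ * M))) (η : ℝ) {θ φ θ' φ' : ι → ℝ}
    (hθ : θ' = θ - η • (M *ᵥ φ')) (hφ : φ' = φ + η • (Mᵀ *ᵥ θ')) :
    (1 + η ^ 2 * c) * (θ' ⬝ᵥ θ' + φ' ⬝ᵥ φ') ≤ θ ⬝ᵥ θ + φ ⬝ᵥ φ := by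
  have hMφ := M.mul_dotProduct_self_le_mulVec hc φ'
  have hMθ := mul_dotProduct_self_le_transpose_mulVec hM hc θ'
  rw [sppm_energy_identity M η hθ hφ]
  nlinarith [sq_nonneg η]

theorem tendsto_zero_of_eNormSq_le {v : ℕ → ι → ℝ} {r : ℕ → ℝ}
    (hr : Tendsto r atTop (𝓝 0)) (hv : ∀ t, eNormSq (v t) ≤ r t) :
    Tendsto v atTop (𝓝 0) := by
  let e := EuclideanSpace.equiv ι ℝ
  have hsqrt : Tendsto (fun t => √(r t)) atTop (𝓝 0) := by simpa using hr.sqrt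
  have he : Tendsto (fun t => e.symm (v t)) atTop (𝓝 0) :=
    squeeze_zero_norm (fun t => Real.le_sqrt_of_sq_le (hv t)) hsqrt
  simpa only [Function.comp_def, ContinuousLinearEquiv.apply_symm_apply, map_zero] using
    (e.continuous.tendsto 0).comp he

end

/-- global linear convergence of SPPM in the bilinear game (Theorem 3 of the
paper): `r_{t+1} ≤ r_t/(1 + η²λ_min(MᵀM))`, `λ_min(MᵀM) > 0`, and the iterates converge to the
unique stationary point `(0, 0)`. -/
theorem bilinear_sppm_linear_convergence
    (n : ℕ) (M : Matrix (Fin n) (Fin n) ℝ) (hM : IsUnit M) (η : ℝ) (hη : 0 < η)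
    (hMtM : (Mᵀ * M).IsHermitian) (lmin : ℝ)
    (hlmin : IsLeast (Set.range hMtM.eigenvalues) lmin)
    (Θ Φ : ℕ → Fin n → ℝ)
    (hΘ : ∀ t : ℕ, Θ (t + 1) = Θ t - η • (M *ᵥ Φ (t + 1)))
    (hΦ : ∀ t : ℕ, Φ (t + 1) = Φ t + η • (Mᵀ *ᵥ Θ (t + 1)))
    (r : ℕ → ℝ) (hr : ∀ t, r t = eNormSq (Θ t) + eNormSq (Φ t)) :
    0 < lmin ∧
    (∀ t : ℕ, r (t + 1) ≤ r t / (1 + η ^ 2 * lmin)) ∧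
    Tendsto (fun t => (Θ t, Φ t)) atTop (𝓝 (0, 0)) := by
  have hlower : lmin ∈ lowerBounds (spectrum ℝ (Mᵀ * M)) :=
    hMtM.spectrum_real_eq_range_eigenvalues ▸ hlmin.2
  have hpos : 0 < lmin := by
    have hPD : (Mᵀ * M).PosDef := by
      simpa using PosDef.conjTranspose_mul_self M (mulVec_injective_iff_isUnit.2 hM)
    obtain ⟨i, rfl⟩ := hlmin.1
    exact hMtM.posDef_iff_eigenvalues_pos.1 hPD i
  have hK : 1 < 1 + η ^ 2 * lmin := by simp only [lt_add_iff_pos_right]; positivity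
  have hstep (t : ℕ) : r (t + 1) ≤ r t / (1 + η ^ 2 * lmin) := by
    rw [le_div_iff₀ (by linarith), mul_comm, hr, hr]
    simp only [eNormSq_eq_dotProduct]
    exact sppm_contraction hM hlower η (hΘ t) (hΦ t)
  have hΘr (t : ℕ) : eNormSq (Θ t) ≤ r t := hr t ▸ le_add_of_nonneg_right (eNormSq_nonneg _)
  have hΦr (t : ℕ) : eNormSq (Φ t) ≤ r t := hr t ▸ le_add_of_nonneg_left (eNormSq_nonneg _)
  have hr0 : Tendsto r atTop (𝓝 0) :=
    tendsto_zero_of_succ_le_div hK (fun t => (eNormSq_nonneg _).trans (hΦr t)) hstep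
  exact ⟨hpos, hstep, (tendsto_zero_of_eNormSq_le hr0 hΘr).prodMk_nhds
    (tendsto_zero_of_eNormSq_le hr0 hΦr)⟩
end
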